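/- Separation of a compact convex set from a proper cone at an extreme point: let C ⊂ X be a locally compact, closed, convex, proper cone with vertex x, and K ⊂ X a nonempty compact convex set, in a Hausdorff locally convex real space X. Then there exist an extreme point y of K and a continuous linear functional l such that l ≥ 0 on K − y, l ≤ 0 on C − x, and (C − x) ∩ (K − y) = {0}. -/

import Mathlib

/-!
Local compactness gives a closed convex neighbourhood `V` of the vertex `x` for which the cap
`C ∩ V` is compact. Properness makes `x` an extreme point of the cap, so
by (a weak form of) Milman's converse to Krein–Milman, `x` lies outside the closed convex hull of
the compact set `C ∩ frontier V`; Hahn–Banach separates them by some `f`. Every ray from `x` into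
`C` leaves the compact cap, hence crosses `frontier V`, so `f` increases strictly along it, i.e.
`f > f x` on `C \ {x}`. Maximizing `f` over `K` on an exposed face and taking an extreme point of
that face (Krein–Milman lemma) gives `y`, and `l = -f` works.
-/

open Set Filter Topology Pointwise

theorem IsPreconnected.inter_frontier_nonempty {Y : Type*} [TopologicalSpace Y] {s t : Set Y}
    (hs : IsPreconnected s) (hst : (s ∩ t).Nonempty) (hst' : (s \ t).Nonempty) :
    (s ∩ frontier t).Nonempty := by
  by_contra! h
  have hint : ∀ z ∈ s, z ∈ closure t → z ∈ interior t := fun z hz hzt => by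
    by_contra hzi
    exact h.subset ⟨hz, hzt, hzi⟩
  have hsi : (s ∩ interior t).Nonempty :=
    let ⟨z, hz, hzt⟩ := hst; ⟨z, hz, hint z hz (subset_closure hzt)⟩
  have hsc : (s ∩ (closure t)ᶜ).Nonempty :=
    let ⟨z, hz, hzt⟩ := hst'; ⟨z, hz, fun hzc => hzt (interior_subset (hint z hz hzc))⟩
  obtain ⟨z, -, hzi, hzc⟩ := hs (interior t) (closure t)ᶜ isOpen_interior
    isClosed_closure.isOpen_compl (fun z hz => (em (z ∈ closure t)).imp (hint z hz) id) hsi hsc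
  exact hzc (interior_subset_closure hzi)

theorem mem_extremePoints_of_vertex {X : Type*} [AddCommGroup X] [Module ℝ X] {C S : Set X}
    {x : X} (hcone : ∀ t : ℝ, 0 ≤ t → ∀ y ∈ C, x + t • (y - x) ∈ C)
    (hproper : ∀ y ∈ C, ∀ z ∈ C, y - x = x - z → y = x) (hSC : S ⊆ C) (hx : x ∈ S) :
    x ∈ S.extremePoints ℝ := by
  have key : ∀ a ∈ S, ∀ b ∈ S, x ∈ openSegment ℝ a b → a = x := by
    rintro a ha b hb ⟨α, β, hα, hβ, hαβ, hab⟩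
    refine hproper a (hSC ha) _ (hcone (α⁻¹ * β) (by positivity) b (hSC hb)) ?_
    have hsplit : α • (a - x) = β • (x - b) := by
      linear_combination (norm := module) hab - hαβ • x
    calc a - x = α⁻¹ • (α • (a - x)) := by rw [smul_smul, inv_mul_cancel₀ hα.ne', one_smul]
      _ = x - (x + (α⁻¹ * β) • (b - x)) := by rw [hsplit]; module
  exact ⟨hx, fun _ ha _ hb hab => key _ ha _ hb hab⟩

section LocallyConvex

variable {X : Type*} [AddCommGroup X] [Module ℝ X] [TopologicalSpace X]
  [IsTopologicalAddGroup X] [ContinuousSMul ℝ X]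

theorem IsCompact.convexJoin {s t : Set X} (hs : IsCompact s) (ht : IsCompact t) :
    IsCompact (_root_.convexJoin ℝ s t) := by
  have himage : _root_.convexJoin ℝ s t =
      (fun p : X × X × ℝ => (1 - p.2.2) • p.1 + p.2.2 • p.2.1) '' (s ×ˢ t ×ˢ Icc 0 1) := by
    ext z
    simp only [mem_convexJoin, segment_eq_image, mem_image, mem_prod, Prod.exists]
    aesop
  rw [himage]
  exact (hs.prod (ht.prod isCompact_Icc)).image (by fun_prop)

theorem isCompact_convexHull_union {s t : Set X} (hs : IsCompact (convexHull ℝ s))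
    (ht : IsCompact (convexHull ℝ t)) : IsCompact (convexHull ℝ (s ∪ t)) := by
  rcases s.eq_empty_or_nonempty with rfl | hs₀
  · simpa using ht
  rcases t.eq_empty_or_nonempty with rfl | ht₀
  · simpa using hs
  rw [convexHull_union hs₀ ht₀]
  exact hs.convexJoin ht

theorem isCompact_convexHull_biUnion {ι : Type*} (s : Finset ι) {K : ι → Set X}
    (hK : ∀ i ∈ s, IsCompact (convexHull ℝ (K i))) :
    IsCompact (convexHull ℝ (⋃ i ∈ s, K i)) := by
  classical
  induction s using Finset.induction_on with
  | empty => simp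
  | insert a s _ ih =>
    rw [Finset.set_biUnion_insert]
    exact isCompact_convexHull_union (hK a (s.mem_insert_self a))
      (ih fun i hi => hK i (Finset.mem_insert_of_mem hi))

theorem exists_isClosed_convex_mem_nhds_subset [LocallyConvexSpace ℝ X] {x : X} {U : Set X}
    (hU : U ∈ 𝓝 x) : ∃ V ∈ 𝓝 x, IsClosed V ∧ Convex ℝ V ∧ V ⊆ U := by
  obtain ⟨F, hF, hFclosed, hFU⟩ := exists_mem_nhds_isClosed_subset hU
  obtain ⟨S, ⟨hS, hSconv⟩, hSF⟩ := (LocallyConvexSpace.convex_basis (𝕜 := ℝ) x).mem_iff.1 hF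
  exact ⟨closure S, mem_of_superset hS subset_closure, isClosed_closure, hSconv.closure,
    (closure_minimal hSF hFclosed).trans hFU⟩

variable [T2Space X] [LocallyConvexSpace ℝ X]

theorem notMem_closure_convexHull_of_mem_extremePoints {Q B : Set X} {p : X}
    (hQ : IsCompact Q) (hQconv : Convex ℝ Q) (hp : p ∈ Q.extremePoints ℝ) (hBQ : B ⊆ Q)
    (hB : IsClosed B) (hpB : p ∉ B) : p ∉ closure (convexHull ℝ B) := by
  obtain ⟨V, hV, hVclosed, hVconv, hVB⟩ := exists_isClosed_convex_mem_nhds_subset (x := 0)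
    (U := (p - ·) ⁻¹' Bᶜ) ((hB.isOpen_compl.preimage (by fun_prop)).mem_nhds (by simpa))
  obtain ⟨t, htB, hBt⟩ := (hQ.of_isClosed_subset hB hBQ).elim_nhds_subcover (· +ᵥ V)
    fun b _ => by simpa using vadd_mem_nhds_vadd b hV
  set P : X → Set X := fun b => closure (convexHull ℝ (B ∩ (b +ᵥ V)))
  have hPQ : ∀ b, P b ⊆ Q := fun b =>
    closure_minimal (convexHull_min (inter_subset_left.trans hBQ) hQconv) hQ.isClosed
  have hPV : ∀ b, P b ⊆ b +ᵥ V := fun b =>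
    closure_minimal (convexHull_min inter_subset_right (hVconv.vadd b)) (hVclosed.vadd b)
  set H := convexHull ℝ (⋃ b ∈ t, P b)
  have hH : IsCompact H := isCompact_convexHull_biUnion t fun b _ => by
    rw [(convex_convexHull ℝ _).closure.convexHull_eq]
    exact hQ.of_isClosed_subset isClosed_closure (hPQ b)
  have hBH : B ⊆ ⋃ b ∈ t, P b := fun z hz => by
    obtain ⟨b, hbt, hzb⟩ := mem_iUnion₂.1 (hBt hz)
    exact mem_iUnion₂.2 ⟨b, hbt, subset_closure (subset_convexHull ℝ _ ⟨hz, hzb⟩)⟩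
  intro hpB'
  have hpH : p ∈ H := closure_minimal (convexHull_mono hBH) hH.isClosed hpB'
  have hHQ : H ⊆ Q := convexHull_min (iUnion₂_subset fun b _ => hPQ b) hQconv
  obtain ⟨b, hbt, hpb⟩ := mem_iUnion₂.1 <| extremePoints_convexHull_subset <|
    inter_extremePoints_subset_extremePoints_of_subset hHQ ⟨hpH, hp⟩
  obtain ⟨v, hv, rfl⟩ := hPV b hpb
  exact hVB hv (by simpa using htB b hbt)

theorem exists_add_smul_notMem_of_isCompact {Q : Set X} (hQ : IsCompact Q) (x : X) {v : X}
    (hv : v ≠ 0) : ∃ t : ℝ, 0 ≤ t ∧ x + t • v ∉ Q := by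
  obtain ⟨g, hg⟩ := SeparatingDual.exists_eq_one (R := ℝ) hv
  obtain ⟨M, hM⟩ := hQ.bddAbove_image g.continuous.continuousOn
  refine ⟨max 0 (M - g x + 1), le_max_left _ _, fun hQ' => ?_⟩
  have := hM (mem_image_of_mem g hQ')
  simp only [map_add, map_smul, hg, smul_eq_mul, mul_one] at this
  linarith [le_max_right 0 (M - g x + 1)]

theorem exists_continuousLinearMap_pos_of_vertex {C : Set X} {x : X} (hx : x ∈ C)
    (hclosed : IsClosed C) (hconvC : Convex ℝ C)
    (hcone : ∀ t : ℝ, 0 ≤ t → ∀ y ∈ C, x + t • (y - x) ∈ C)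
    (hproper : ∀ y ∈ C, ∀ z ∈ C, y - x = x - z → y = x) (hloc : ∃ N ∈ 𝓝[C] x, IsCompact N) :
    ∃ f : X →L[ℝ] ℝ, ∀ c ∈ C, c ≠ x → 0 < f (c - x) := by
  obtain ⟨N, hN, hNcpt⟩ := hloc
  obtain ⟨O, hO, hON⟩ := mem_nhdsWithin_iff_exists_mem_nhds_inter.1 hN
  obtain ⟨V, hV, hVclosed, hVconv, hVO⟩ := exists_isClosed_convex_mem_nhds_subset hO
  have hQ : IsCompact (C ∩ V) :=
    hNcpt.of_isClosed_subset (hclosed.inter hVclosed) fun z hz => hON ⟨hVO hz.2, hz.1⟩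
  have hxB : x ∉ C ∩ frontier V := fun h => h.2.2 (mem_interior_iff_mem_nhds.2 hV)
  have hxhull : x ∉ closure (convexHull ℝ (C ∩ frontier V)) :=
    notMem_closure_convexHull_of_mem_extremePoints hQ (hconvC.inter hVconv)
      (mem_extremePoints_of_vertex hcone hproper inter_subset_left ⟨hx, mem_of_mem_nhds hV⟩)
      (inter_subset_inter_right C hVclosed.frontier_subset) (hclosed.inter isClosed_frontier) hxB
  obtain ⟨f, u, hfx, hfB⟩ := geometric_hahn_banach_point_closed
    (convex_convexHull ℝ _).closure isClosed_closure hxhull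
  refine ⟨f, fun c hc hcx => ?_⟩
  set φ : ℝ → X := fun t => x + t • (c - x)
  have hray : φ '' Ici 0 ⊆ C := by
    rintro _ ⟨t, ht, rfl⟩
    exact hcone t ht c hc
  obtain ⟨t₁, ht₁, ht₁Q⟩ := exists_add_smul_notMem_of_isCompact hQ x (sub_ne_zero.2 hcx)
  obtain ⟨_, ⟨t, ht, rfl⟩, htV⟩ :=
    (isPreconnected_Ici.image φ (by fun_prop)).inter_frontier_nonempty
    ⟨x, ⟨0, self_mem_Ici, by simp [φ]⟩, mem_of_mem_nhds hV⟩
    ⟨φ t₁, mem_image_of_mem φ ht₁, fun h => ht₁Q ⟨hray (mem_image_of_mem φ ht₁), h⟩⟩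
  have ht₀ : t ≠ 0 := by
    rintro rfl
    exact hxB ⟨hx, by simpa [φ] using htV⟩
  have hu : u < f x + t * f (c - x) := by
    simpa only [φ, map_add, map_smul, smul_eq_mul] using
      hfB _ (subset_closure (subset_convexHull ℝ _ ⟨hray (mem_image_of_mem φ ht), htV⟩))
  exact pos_of_mul_pos_right (by linarith) ht

theorem IsCompact.exists_mem_extremePoints_isMaxOn {K : Set X} (hK : IsCompact K)
    (hne : K.Nonempty) (f : X →L[ℝ] ℝ) : ∃ y ∈ K.extremePoints ℝ, IsMaxOn f K y := by
  have hexp : IsExposed ℝ K {z ∈ K | ∀ w ∈ K, f w ≤ f z} := fun _ => ⟨f, rfl⟩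
  obtain ⟨z, hzK, hz⟩ := hK.exists_isMaxOn hne f.continuous.continuousOn
  obtain ⟨y, hy⟩ := (hexp.isCompact hK).extremePoints_nonempty ⟨z, hzK, hz⟩
  exact ⟨y, hexp.isExtreme.extremePoints_subset_extremePoints hy, (extremePoints_subset hy).2⟩

end LocallyConvex

theorem stmt_16_general {X : Type*} [AddCommGroup X] [Module ℝ X] [TopologicalSpace X]
    [IsTopologicalAddGroup X] [ContinuousSMul ℝ X] [T2Space X] [LocallyConvexSpace ℝ X]
    (C : Set X) (x : X)
    (hx : x ∈ C) (hclosed : IsClosed C) (hconvC : Convex ℝ C)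
    (hcone : ∀ t : ℝ, 0 ≤ t → ∀ y ∈ C, x + t • (y - x) ∈ C)
    (hproper : ∀ y ∈ C, ∀ z ∈ C, y - x = x - z → y = x)
    (hloccpt : ∀ z ∈ C, ∃ N ∈ nhdsWithin z C, N ⊆ C ∧ IsCompact N)
    (K : Set X) (hne : K.Nonempty) (hcpt : IsCompact K) :
    ∃ y ∈ K.extremePoints ℝ, ∃ l : X →L[ℝ] ℝ,
      (∀ z ∈ K, 0 ≤ l (z - y)) ∧ (∀ c ∈ C, l (c - x) ≤ 0) ∧
      ((fun c => c - x) '' C) ∩ ((fun z => z - y) '' K) = {0} := by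
  obtain ⟨N, hN, -, hNcpt⟩ := hloccpt x hx
  obtain ⟨f, hf⟩ :=
    exists_continuousLinearMap_pos_of_vertex hx hclosed hconvC hcone hproper ⟨N, hN, hNcpt⟩
  obtain ⟨y, hyK, hymax⟩ := hcpt.exists_mem_extremePoints_isMaxOn hne f
  refine ⟨y, hyK, -f, fun z hz => ?_, fun c hc => ?_, ?_⟩
  · simpa using hymax hz
  · rcases eq_or_ne c x with rfl | hcx
    · simp
    · simpa using (hf c hc hcx).le
  · refine subset_antisymm ?_ (singleton_subset_iff.2 ⟨⟨x, hx, sub_self x⟩, y, hyK.1, sub_self y⟩)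
    rintro _ ⟨⟨c, hc, rfl⟩, z, hz, hzc : z - y = c - x⟩
    rw [mem_singleton_iff, sub_eq_zero]
    by_contra hcx
    have hpos := hf c hc hcx
    rw [← hzc, map_sub] at hpos
    exact (sub_pos.1 hpos).not_ge (hymax hz)

/-- Separation of a compact convex set from a proper cone at an extreme point: if `C` is
a locally compact, closed, convex, proper cone with vertex `x` and `K` a nonempty compact
convex set, then there are an extreme point `y` of `K` and a continuous linear functional
`l` with `l ≥ 0` on `K − y`, `l ≤ 0` on `C − x`, and `(C − x) ∩ (K − y) = {0}`. -/
theorem stmt_16 {X : Type*} [AddCommGroup X] [Module ℝ X] [TopologicalSpace X]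
    [IsTopologicalAddGroup X] [ContinuousSMul ℝ X] [T2Space X] [LocallyConvexSpace ℝ X]
    (C : Set X) (x : X)
    (hx : x ∈ C) (hclosed : IsClosed C) (hconvC : Convex ℝ C)
    (hcone : ∀ t : ℝ, 0 ≤ t → ∀ y ∈ C, x + t • (y - x) ∈ C)
    (hproper : ∀ y ∈ C, ∀ z ∈ C, y - x = x - z → y = x)
    (hloccpt : ∀ z ∈ C, ∃ N ∈ nhdsWithin z C, N ⊆ C ∧ IsCompact N)
    (K : Set X) (hne : K.Nonempty) (hcpt : IsCompact K) (hconvK : Convex ℝ K) :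
    ∃ y ∈ K.extremePoints ℝ, ∃ l : X →L[ℝ] ℝ,
      (∀ z ∈ K, 0 ≤ l (z - y)) ∧ (∀ c ∈ C, l (c - x) ≤ 0) ∧
      ((fun c => c - x) '' C) ∩ ((fun z => z - y) '' K) = {0} :=
  stmt_16_general C x hx hclosed hconvC hcone hproper hloccpt K hne hcpt
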